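/- arXiv:1505.03780 — 6 statements merged into one kernel-verified Lean document; each statement's English description precedes it below -/
import Mathlib

section
/- Let G be an abelian group and φ : G → G a group automorphism such that G is generated by elements g satisfying φ(g) = 2^i · g for some natural number i ≥ 1 (depending on g). Then G is uniquely 2-divisible, i.e., multiplication by 2 is a bijection from G to itself. -/
/-- If an abelian group `G` has an automorphism `φ` such that `G` is generated
by elements `g` with `φ g = 2^i • g` for some `i ≥ 1`, then `G` is uniquely 2-divisible,
i.e. multiplication by 2 is a bijection of `G`. -/
theorem stmt_0 (G : Type*) [AddCommGroup G] (φ : G ≃+ G)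
    (hgen : AddSubgroup.closure {g : G | ∃ i : ℕ, 1 ≤ i ∧ φ g = 2 ^ i • g} = ⊤) :
    Function.Bijective (fun g : G => (2 : ℤ) • g) := by
  set S : Set G := {g : G | ∃ i : ℕ, 1 ≤ i ∧ φ g = 2 ^ i • g} with hSdef
  constructor
  · -- Injectivity.  It suffices to show that the only 2-torsion element is 0.
    have key : ∀ t : G, (2 : ℤ) • t = 0 → t = 0 := by
      intro t ht
      -- `t` lies in the span of a finite subset `u ⊆ S`.
      have htS : t ∈ Submodule.span ℤ S := by
        have : t ∈ AddSubgroup.closure S := by rw [hgen]; trivial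
        rwa [← Submodule.span_int_eq_addSubgroupClosure,
          Submodule.mem_toAddSubgroup] at this
      obtain ⟨u, huS, hu⟩ := Submodule.mem_span_finite_of_mem_span htS
      set H : Submodule ℤ G := Submodule.span ℤ (u : Set G) with hHdef
      haveI : Module.Finite ℤ H := Module.Finite.span_of_finite ℤ u.finite_toSet
      set J : Ideal ℤ := Ideal.span {2} with hJdef
      set φₗ : G →ₗ[ℤ] G := φ.toAddMonoidHom.toIntLinearMap with hφₗ
      have hφₗ_apply : ∀ x : G, φₗ x = φ x := fun _ => rfl
      -- the image of `H` under `φ` is contained in `J • H`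
      have hmap : Submodule.map φₗ H ≤ J • H := by
        rw [hHdef, Submodule.map_span, Submodule.span_le]
        rintro - ⟨g, hg, rfl⟩
        obtain ⟨i, hi1, hgi⟩ := huS hg
        have h2i : ((2 : ℤ) ^ i) ∈ J := Ideal.mem_span_singleton.mpr
          (dvd_pow_self 2 (by omega : i ≠ 0))
        have : φₗ g = ((2 : ℤ) ^ i) • g := by
          rw [hφₗ_apply, hgi, ← natCast_zsmul]
          norm_num
        rw [this]
        exact Submodule.smul_mem_smul h2i (Submodule.subset_span hg)
      have hJH : J • H ≤ H := Submodule.smul_le_right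
      have hHH : ∀ x ∈ H, φₗ x ∈ H := fun x hx =>
        hJH (hmap (Submodule.mem_map_of_mem hx))
      -- restrict `φ` to a linear endomorphism `f` of `H`
      set f : H →ₗ[ℤ] H := φₗ.restrict hHH with hfdef
      have hf_apply : ∀ x : H, (f x : G) = φ x := fun _ => rfl
      have finj : Function.Injective f := by
        intro x y hxy
        have : φ (x : G) = φ (y : G) := by
          rw [← hf_apply, ← hf_apply, hxy]
        exact Subtype.ext (φ.injective this)
      -- `f` maps into `J • ⊤`
      have hfrange : ∀ x : H, f x ∈ (J • ⊤ : Submodule ℤ H) := by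
        intro x
        have h1 : (f x : G) ∈ J • H := hmap ⟨x, x.2, (hf_apply x).symm⟩
        have h2 : J • H = Submodule.map H.subtype (J • ⊤) := by
          rw [Submodule.map_smul'', Submodule.map_subtype_top]
        rw [h2] at h1
        obtain ⟨y, hy, hyx⟩ := h1
        have : y = f x := Subtype.ext hyx
        rwa [← this]
      -- the 2-torsion submodule `T` of `H`
      set T : Submodule ℤ H := LinearMap.ker ((2 : ℤ) • (LinearMap.id : H →ₗ[ℤ] H))
        with hTdef
      have hTmem : ∀ x : H, x ∈ T ↔ (2 : ℤ) • x = 0 := by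
        intro x
        rw [hTdef, LinearMap.mem_ker, LinearMap.smul_apply, LinearMap.id_apply]
      -- `T` is finite
      haveI : Module.Finite ℤ T := Module.Finite.iff_fg.mpr (IsNoetherian.noetherian T)
      haveI : AddGroup.FG T := Module.Finite.iff_addGroup_fg.mp inferInstance
      haveI : Finite T := by
        refine AddCommGroup.finite_of_fg_torsion T ?_
        intro x
        refine isOfFinAddOrder_iff_nsmul_eq_zero.mpr ⟨2, two_pos, ?_⟩
        have hx : (2 : ℤ) • (x : H) = 0 := (hTmem _).mp x.2
        refine Subtype.ext ?_
        push_cast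
        rw [← natCast_zsmul]
        exact_mod_cast hx
      -- `f` restricts to a map `e` on `T`, which is bijective by finiteness
      have hfT : ∀ x : H, x ∈ T → f x ∈ T := by
        intro x hx
        rw [hTmem] at hx ⊢
        rw [← map_smul, hx, map_zero]
      set e : T → T := fun x => ⟨f x, hfT _ x.2⟩ with hedef
      have einj : Function.Injective e := by
        intro x y hxy
        exact Subtype.ext (finj (congrArg Subtype.val hxy))
      have esurj : Function.Surjective e := Finite.injective_iff_surjective.mp einj
      -- elements in the image of `e^[n]` lie in `J ^ n • ⊤`
      have hiter : ∀ (n : ℕ) (x : T), ((e^[n] x : H)) ∈ (J ^ n • ⊤ : Submodule ℤ H) := by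
        intro n
        induction n with
        | zero => intro x; simp [Ideal.one_eq_top]
        | succ n ih =>
          intro x
          rw [Function.iterate_succ_apply']
          set y := e^[n] x with hy
          have h1 : (e y : H) = f y := rfl
          have h2 : f (y : H) ∈ Submodule.map f (J ^ n • ⊤) :=
            Submodule.mem_map_of_mem (ih x)
          rw [Submodule.map_smul''] at h2
          have h3 : Submodule.map f ⊤ ≤ (J • ⊤ : Submodule ℤ H) := by
            rintro - ⟨z, -, rfl⟩; exact hfrange z
          have h4 : (J ^ n • Submodule.map f ⊤ : Submodule ℤ H) ≤ J ^ (n + 1) • ⊤ := by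
            refine le_trans (Submodule.smul_mono le_rfl h3) ?_
            rw [← Submodule.smul_assoc, smul_eq_mul, ← pow_succ]
          rw [h1]
          exact h4 h2
      -- hence `t` lies in every `J ^ n • ⊤`, so Krull's intersection theorem applies
      have htH : t ∈ H := hu
      have htT : (⟨t, htH⟩ : H) ∈ T := by
        rw [hTmem]
        exact Subtype.ext (by simpa using ht)
      have hinf : (⟨t, htH⟩ : H) ∈ (⨅ i : ℕ, J ^ i • ⊤ : Submodule ℤ H) := by
        rw [Submodule.mem_iInf]
        intro n
        obtain ⟨x, hx⟩ := (esurj.iterate n) ⟨⟨t, htH⟩, htT⟩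
        have := hiter n x
        rw [hx] at this
        exact this
      obtain ⟨n, π, hπ⟩ := Module.Finite.exists_fin' ℤ H
      set eqv : ((Fin n → ℤ) ⧸ LinearMap.ker π) ≃ₗ[ℤ] H :=
        π.quotKerEquivOfSurjective hπ with heqv
      have hinf0 : eqv.symm ⟨t, htH⟩ ∈
          (⨅ i : ℕ, J ^ i • ⊤ : Submodule ℤ ((Fin n → ℤ) ⧸ LinearMap.ker π)) := by
        rw [Submodule.mem_iInf]
        intro m
        have h1 : (⟨t, htH⟩ : H) ∈ (J ^ m • ⊤ : Submodule ℤ H) :=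
          (Submodule.mem_iInf _).mp hinf m
        have h2 : eqv.symm.toLinearMap ⟨t, htH⟩ ∈
            Submodule.map eqv.symm.toLinearMap (J ^ m • ⊤) :=
          Submodule.mem_map_of_mem h1
        rwa [Submodule.map_smul'', Submodule.map_top, LinearEquiv.range] at h2
      obtain ⟨r, hr⟩ := (J.mem_iInf_smul_pow_eq_bot_iff (eqv.symm ⟨t, htH⟩)).mp hinf0
      have hr' : (r : ℤ) • (⟨t, htH⟩ : H) = ⟨t, htH⟩ := by
        have := congrArg eqv hr
        rwa [map_smul, eqv.apply_symm_apply] at this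
      obtain ⟨k, hk⟩ := Ideal.mem_span_singleton.mp r.2
      have h2t : (2 : ℤ) • (⟨t, htH⟩ : H) = 0 := Subtype.ext (by simpa using ht)
      have : (⟨t, htH⟩ : H) = 0 := by
        rw [← hr', hk, mul_comm, mul_smul, h2t, smul_zero]
      exact congrArg Subtype.val this
    intro a b hab
    have : (2 : ℤ) • (a - b) = 0 := by
      rw [smul_sub, sub_eq_zero]
      exact hab
    exact sub_eq_zero.mp (key _ this)
  · -- Surjectivity
    intro x
    have hx : x ∈ AddSubgroup.closure S := by rw [hgen]; trivial
    have hle : AddSubgroup.closure S ≤ (zsmulAddGroupHom (2 : ℤ) : G →+ G).range := by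
      rw [AddSubgroup.closure_le]
      rintro g ⟨i, hi1, hgi⟩
      obtain ⟨j, rfl⟩ := Nat.exists_eq_add_of_le hi1
      refine ⟨(2 : ℕ) ^ j • φ.symm g, ?_⟩
      have h1 : ((2 : ℕ) ^ (1 + j)) • φ.symm g = g := by
        rw [← map_nsmul, ← hgi, AddEquiv.symm_apply_apply]
      calc zsmulAddGroupHom (2 : ℤ) ((2 : ℕ) ^ j • φ.symm g)
          = (2 : ℤ) • ((2 : ℕ) ^ j • φ.symm g) := rfl
        _ = ((2 : ℕ) : ℤ) • ((2 : ℕ) ^ j • φ.symm g) := by norm_num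
        _ = (2 : ℕ) • ((2 : ℕ) ^ j • φ.symm g) := natCast_zsmul _ _
        _ = ((2 : ℕ) * (2 : ℕ) ^ j) • φ.symm g := (mul_smul _ _ _).symm
        _ = ((2 : ℕ) ^ (1 + j)) • φ.symm g := by rw [pow_add, pow_one]
        _ = g := h1
    obtain ⟨y, hy⟩ := hle hx
    exact ⟨y, hy⟩
end

section
/- For any commutative ring A and any natural number k ≥ 2, the ring of formal Laurent series A((t)) is weakly k-fold stable; moreover the witnessing unit can be taken to be t^i for a suitable integer i. -/
/-!
Every power `t ^ i` is a unit of `A((t))`, and a Laurent series whose leading coefficient is a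
unit is itself a unit. Choosing `i` below the orders of the finitely many given series makes
`t ^ i` the leading term of each `f j + t ^ i`, so each sum has leading coefficient `1`.
-/

namespace LaurentSeries

variable {A : Type*} [CommRing A]

theorem isUnit_single_one (i : ℤ) : IsUnit (HahnSeries.single i (1 : A) : LaurentSeries A) :=
  .of_mul_eq_one (HahnSeries.single (-i) 1) <| by
    rw [HahnSeries.single_mul_single, add_neg_cancel, mul_one, HahnSeries.single_zero_one]

theorem isUnit_of_isUnit_leadingCoeff {g : LaurentSeries A} (h : IsUnit g.leadingCoeff) :
    IsUnit g :=
  HahnSeries.isUnit_of_isUnit_leadingCoeff_AddUnitOrder h (AddGroup.isAddUnit _)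

theorem isUnit_add_single_one_of_lt_order {f : LaurentSeries A} {i : ℤ} (hi : i < f.order) :
    IsUnit (f + HahnSeries.single i 1) := by
  nontriviality A
  by_cases hf : f = 0
  · simpa [hf] using isUnit_single_one i
  refine isUnit_of_isUnit_leadingCoeff ?_
  have hlt : (HahnSeries.single i (1 : A)).orderTop < f.orderTop := by
    rw [HahnSeries.orderTop_single one_ne_zero, ← HahnSeries.order_eq_orderTop_of_ne_zero hf]
    exact_mod_cast hi
  rw [HahnSeries.leadingCoeff_add_eq_right hlt, HahnSeries.leadingCoeff_of_single]
  exact isUnit_one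

end LaurentSeries

theorem stmt_5_general (A : Type*) [CommRing A] (k : ℕ)
    (f : Fin (k - 1) → LaurentSeries A) :
    ∃ i : ℤ, IsUnit (HahnSeries.single i (1 : A) : LaurentSeries A) ∧
      ∀ j, IsUnit (f j + HahnSeries.single i (1 : A)) := by
  obtain ⟨b, hb⟩ := (Set.finite_range fun j => (f j).order).bddBelow
  refine ⟨b - 1, LaurentSeries.isUnit_single_one _, fun j => ?_⟩
  exact LaurentSeries.isUnit_add_single_one_of_lt_order
    (by linarith [hb (Set.mem_range_self j)])

/-- for any commutative ring `A` and `k ≥ 2`, the ring of formal Laurent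
series `A((t))` is weakly `k`-fold stable, with witnessing unit a power `t^i` of `t`:
for any `k - 1` Laurent series there is `i : ℤ` such that `t^i` is a unit and adding
`t^i` to each of the given series yields a unit. -/
theorem stmt_5 (A : Type*) [CommRing A] (k : ℕ) (hk : 2 ≤ k)
    (f : Fin (k - 1) → LaurentSeries A) :
    ∃ i : ℤ, IsUnit (HahnSeries.single i (1 : A) : LaurentSeries A) ∧
      ∀ j, IsUnit (f j + HahnSeries.single i (1 : A)) :=
  stmt_5_general A k f
end

section
/- Let A be a commutative reduced ring with connected spectrum. A Laurent series f ∈ A((t)) is a unit if and only if its first nonzero coefficient is a unit of A. -/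
/-!
If `f * g = 1`, reduce modulo a prime `p`: over the domain `A ⧸ p` orders add, so the leading
coefficient `a` of `f` survives mod `p` exactly when no coefficient of `g` below `-ord f` does.
Hence `V(a)` is the union of the basic opens `D(g_j)`, `j < -ord f`, so it is clopen. By
connectedness `V(a)` is empty or everything; the latter would make `a` nilpotent, hence zero.
So `a` is a unit.
-/

open HahnSeries

namespace PrimeSpectrum

theorem isUnit_or_isNilpotent_of_isOpen_zeroLocus {R : Type*} [CommRing R]
    [ConnectedSpace (PrimeSpectrum R)] {a : R} (h : IsOpen (zeroLocus {a})) :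
    IsUnit a ∨ IsNilpotent a := by
  rcases _root_.isClopen_iff.mp ⟨isClosed_zeroLocus _, h⟩ with h | h
  · left
    rwa [← zeroLocus_span, zeroLocus_empty_iff_eq_top, Ideal.span_singleton_eq_top] at h
  · right
    rw [zeroLocus_eq_univ_iff, Set.singleton_subset_iff] at h
    exact mem_nilradical.mp h

end PrimeSpectrum

namespace HahnSeries

variable {Γ : Type*} [AddCommGroup Γ] [LinearOrder Γ] [IsOrderedAddMonoid Γ]

theorem coeff_ne_zero_iff_of_mul_eq_one {R : Type*} [CommRing R] [IsDomain R]
    {f g : HahnSeries Γ R} (hfg : f * g = 1) {n : Γ} (hn : n ≤ f.order) :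
    f.coeff n ≠ 0 ↔ ∀ j < -n, g.coeff j = 0 := by
  have hf : f ≠ 0 := left_ne_zero_of_mul_eq_one hfg
  have hg : g ≠ 0 := right_ne_zero_of_mul_eq_one hfg
  have hg_order : g.order = -f.order := by
    rw [eq_neg_iff_add_eq_zero, add_comm, ← order_mul hf hg, hfg, order_one]
  rw [← le_order_iff_forall hg, hg_order, neg_le_neg_iff]
  refine ⟨order_le_of_coeff_ne_zero, fun h => ?_⟩
  rw [← le_antisymm h hn]
  exact coeff_order_eq_zero.not.mpr hf

theorem map_coeff_order_ne_zero_iff_of_mul_eq_one {A B : Type*} [CommRing A] [CommRing B]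
    [IsDomain B] (π : A →+* B) {f g : HahnSeries Γ A} (hfg : f * g = 1) :
    π (f.coeff f.order) ≠ 0 ↔ ∀ j < -f.order, π (g.coeff j) = 0 := by
  have hmap : f.map π * g.map π = 1 := by
    refine (HahnSeries.map_mul (π : A →ₙ+* B)).symm.trans ?_
    rw [hfg]
    exact HahnSeries.map_one π.toMonoidWithZeroHom
  refine coeff_ne_zero_iff_of_mul_eq_one hmap <|
    (le_order_iff_forall (left_ne_zero_of_mul_eq_one hmap)).mpr fun j hj => ?_
  simp [coeff_eq_zero_of_lt_order hj]

theorem zeroLocus_coeff_order_eq_of_mul_eq_one {A : Type*} [CommRing A] {f g : HahnSeries Γ A}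
    (hfg : f * g = 1) :
    PrimeSpectrum.zeroLocus {f.coeff f.order} =
      ⋃ j < -f.order, (PrimeSpectrum.basicOpen (g.coeff j) : Set (PrimeSpectrum A)) := by
  ext p
  have hp := map_coeff_order_ne_zero_iff_of_mul_eq_one (Ideal.Quotient.mk p.asIdeal) hfg
  simp only [ne_eq, Ideal.Quotient.eq_zero_iff_mem] at hp
  simp only [PrimeSpectrum.mem_zeroLocus, Set.singleton_subset_iff, SetLike.mem_coe,
    Set.mem_iUnion, PrimeSpectrum.mem_basicOpen, exists_prop]
  rw [← not_iff_not, hp]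
  simp

theorem isUnit_of_isUnit_coeff_order {R : Type*} [CommRing R] {f : HahnSeries Γ R}
    (h : IsUnit (f.coeff f.order)) : IsUnit f :=
  isUnit_of_isUnit_leadingCoeff_AddUnitOrder (by rwa [leadingCoeff_eq]) (AddGroup.isAddUnit _)

end HahnSeries

/-- over a reduced commutative ring `A` with connected spectrum, a nonzero
Laurent series is a unit iff its first nonzero coefficient (the coefficient of its order)
is a unit of `A`. -/
theorem stmt_6 (A : Type*) [CommRing A] [IsReduced A]
    (hconn : ConnectedSpace (PrimeSpectrum A))
    (f : LaurentSeries A) (hf : f ≠ 0) :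
    IsUnit f ↔ IsUnit (f.coeff f.order) := by
  refine ⟨fun hu => ?_, isUnit_of_isUnit_coeff_order⟩
  obtain ⟨g, hfg⟩ := hu.exists_right_inv
  have hopen : IsOpen (PrimeSpectrum.zeroLocus {f.coeff f.order}) := by
    rw [zeroLocus_coeff_order_eq_of_mul_eq_one hfg]
    exact isOpen_biUnion fun j _ => (PrimeSpectrum.basicOpen (g.coeff j)).isOpen
  refine (PrimeSpectrum.isUnit_or_isNilpotent_of_isOpen_zeroLocus hopen).resolve_right ?_
  intro hnil
  exact hf (coeff_order_eq_zero.mp hnil.eq_zero)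
end

section
/- Let R be a commutative ring with 1/2 ∈ R. Then the kernel of the natural map K^M_{n+1}(R[ε]) → K^M_{n+1}(R) induced by ε ↦ 0 is a uniquely 2-divisible abelian group. -/
/-!
The substitution `ε ↦ 2ε` is an automorphism of `R[ε]` over `R` (its inverse is `ε ↦ ε/2`), so it
induces an automorphism `σ` of `K^M(R[ε])` preserving the kernel of `ε ↦ 0`. Writing every unit
of `R[ε]` as `(1 + rε)·u` with `u ∈ Rˣ` and expanding multilinearly, the kernel is generated by
the symbols having at least one entry of the form `1 + rε`, and `σ` multiplies such a symbol by
`2^k`, where `k ≥ 1` is the number of these entries.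

In any abelian group generated by eigenvectors of an automorphism `σ` with eigenvalues `2^k`,
`k ≥ 1`, each generator `s = 2 • (2^(k-1) • σ⁻¹ s)` is divisible by `2`; and if `2 • x = 0`, then
`x` is killed by some product `∏ (σ - 2^kᵢ)`, which is `σ^N` modulo `2`, so `σ^N x = 0` and `x = 0`.
-/

open TrivSqZeroExt

/-- The relations defining the Milnor K-group of a commutative ring `S`:
multilinearity relations and Steinberg relations (a generator `r₁ ⊗ … ⊗ r_n` with some
pair of consecutive entries summing to `1`). -/
def milnorRelSet (S : Type*) [CommRing S] (n : ℕ) : Set (FreeAbelianGroup (Fin n → Sˣ)) :=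
  {x | ∃ (f : Fin n → Sˣ) (i : Fin n) (u v : Sˣ),
      x = FreeAbelianGroup.of (Function.update f i (u * v))
        - FreeAbelianGroup.of (Function.update f i u)
        - FreeAbelianGroup.of (Function.update f i v)} ∪
  {x | ∃ (f : Fin n → Sˣ) (i j : Fin n), (i : ℕ) + 1 = (j : ℕ) ∧
      ((f i : S) + (f j : S) = 1) ∧ x = FreeAbelianGroup.of f}

/-- The `n`-th Milnor K-group of a commutative ring `S`: the quotient of `(Sˣ)^{⊗ n}`
(presented as the free abelian group on `n`-tuples of units, modulo multilinearity)
by the Steinberg relations. -/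
def MilnorK (S : Type*) [CommRing S] (n : ℕ) : Type _ :=
  FreeAbelianGroup (Fin n → Sˣ) ⧸ AddSubgroup.closure (milnorRelSet S n)

instance (S : Type*) [CommRing S] (n : ℕ) : AddCommGroup (MilnorK S n) :=
  QuotientAddGroup.Quotient.addCommGroup _

/-- The Milnor symbol `{r₁, …, r_n}`. -/
def milnorSymbol {S : Type*} [CommRing S] {n : ℕ} (f : Fin n → Sˣ) : MilnorK S n :=
  QuotientAddGroup.mk (FreeAbelianGroup.of f)

/-- Functoriality of Milnor K-groups in ring homomorphisms. -/
def MilnorK.map {S T : Type*} [CommRing S] [CommRing T] (φ : S →+* T) (n : ℕ) :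
    MilnorK S n →+ MilnorK T n := by
  refine QuotientAddGroup.lift _
    ((QuotientAddGroup.mk' (AddSubgroup.closure (milnorRelSet T n))).comp
      (FreeAbelianGroup.map (fun f => (Units.map (φ : S →* T)) ∘ f))) ?_
  intro x hx
  revert x hx
  rw [← SetLike.le_def, AddSubgroup.closure_le]
  rintro x (⟨f, i, u, v, rfl⟩ | ⟨f, i, j, hij, hsum, rfl⟩) <;>
    simp only [SetLike.mem_coe, AddMonoidHom.mem_ker, map_sub]
  · show milnorSymbol (Units.map (φ : S →* T) ∘ Function.update f i (u * v))
      - milnorSymbol (Units.map (φ : S →* T) ∘ Function.update f i u)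
      - milnorSymbol (Units.map (φ : S →* T) ∘ Function.update f i v) = (0 : MilnorK T n)
    unfold milnorSymbol
    change ((_ : FreeAbelianGroup (Fin n → Tˣ)) : FreeAbelianGroup (Fin n → Tˣ) ⧸
      AddSubgroup.closure (milnorRelSet T n)) - _ - _ = 0
    rw [← QuotientAddGroup.mk_sub, ← QuotientAddGroup.mk_sub, QuotientAddGroup.eq_zero_iff]
    refine AddSubgroup.subset_closure (Or.inl ⟨Units.map (φ : S →* T) ∘ f, i,
      Units.map (φ : S →* T) u, Units.map (φ : S →* T) v, ?_⟩)
    simp [Function.comp_update]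
  · show milnorSymbol (Units.map (φ : S →* T) ∘ f) = (0 : MilnorK T n)
    unfold milnorSymbol
    change ((_ : FreeAbelianGroup (Fin n → Tˣ)) : FreeAbelianGroup (Fin n → Tˣ) ⧸
      AddSubgroup.closure (milnorRelSet T n)) = 0
    rw [QuotientAddGroup.eq_zero_iff]
    refine AddSubgroup.subset_closure (Or.inr ⟨Units.map (φ : S →* T) ∘ f, i, j, hij, ?_, rfl⟩)
    simp only [Function.comp_apply, Units.coe_map, MonoidHom.coe_coe]
    rw [← map_add, hsum, map_one]

/-- The unit `1 + r·ε` of the dual numbers, with inverse `1 - r·ε`. -/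
def oneAddEps (R : Type*) [CommRing R] (r : R) : (DualNumber R)ˣ where
  val := 1 + inr r
  inv := 1 - inr r
  val_inv := by
    have h : (inr r : DualNumber R) * inr r = 0 := inr_mul_inr R r r
    ring_nf
    simp [pow_two, h]
  inv_val := by
    have h : (inr r : DualNumber R) * inr r = 0 := inr_mul_inr R r r
    ring_nf
    simp [pow_two, h]

/-- The `R`-algebra endomorphism `σ_a` of the dual numbers sending `ε` to `a·ε`. -/
def epsScale (R : Type*) [CommRing R] (a : R) : DualNumber R →+* DualNumber R where
  toFun x := inl x.fst + inr (a * x.snd)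
  map_one' := by simp
  map_mul' x y := by
    ext
    · simp
    · simp [snd_mul, smul_eq_mul, mul_comm, mul_add]
      ring
  map_zero' := by simp
  map_add' x y := by ext <;> simp [mul_add]

section TwoDivisible

open Polynomial

noncomputable def twoPowLinearFactors : Submonoid ℤ[X] :=
  Submonoid.closure (Set.range fun k : ℕ => X - C (2 ^ (k + 1)))

theorem exists_eq_X_pow_add_two_mul_of_mem_twoPowLinearFactors {p : ℤ[X]}
    (hp : p ∈ twoPowLinearFactors) : ∃ (N : ℕ) (q : ℤ[X]), p = X ^ N + 2 * q := by
  induction hp using Submonoid.closure_induction with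
  | mem p hp =>
    obtain ⟨k, rfl⟩ := hp
    exact ⟨1, -C (2 ^ k), by simp only [map_pow, C_ofNat]; ring⟩
  | one => exact ⟨0, 0, by ring⟩
  | mul p q _ _ hp hq =>
    obtain ⟨N, a, rfl⟩ := hp
    obtain ⟨M, b, rfl⟩ := hq
    exact ⟨N + M, X ^ N * b + a * X ^ M + 2 * a * b, by ring⟩

variable {H : Type*} [AddCommGroup H] {f : Module.End ℤ H}

theorem exists_mem_twoPowLinearFactors_aeval_eq_zero {S : Set H}
    (heig : ∀ x ∈ S, ∃ k : ℕ, f x = (2 : ℤ) ^ (k + 1) • x) {x : H}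
    (hx : x ∈ AddSubgroup.closure S) : ∃ p ∈ twoPowLinearFactors, aeval f p x = 0 := by
  induction hx using AddSubgroup.closure_induction with
  | mem x hx =>
    obtain ⟨k, hk⟩ := heig x hx
    refine ⟨X - C (2 ^ (k + 1)), Submonoid.subset_closure ⟨k, rfl⟩, ?_⟩
    rw [map_sub, aeval_X, aeval_C, LinearMap.sub_apply, Module.algebraMap_end_apply, hk, sub_self]
  | zero => exact ⟨1, one_mem _, map_zero _⟩
  | add x y _ _ hx hy =>
    obtain ⟨p, hp, hpx⟩ := hx
    obtain ⟨q, hq, hqy⟩ := hy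
    refine ⟨q * p, mul_mem hq hp, ?_⟩
    have hqx : aeval f (q * p) x = 0 := by simp [hpx]
    have hpy : aeval f (q * p) y = 0 := by rw [mul_comm]; simp [hqy]
    rw [map_add, hqx, hpy, add_zero]
  | neg x _ hx =>
    obtain ⟨p, hp, hpx⟩ := hx
    exact ⟨p, hp, by rw [map_neg, hpx, neg_zero]⟩

theorem eq_zero_of_two_zsmul_eq_zero_of_aeval_eq_zero (hf : Function.Injective f) {p : ℤ[X]}
    (hp : p ∈ twoPowLinearFactors) {t : H} (hpt : aeval f p t = 0) (ht : (2 : ℤ) • t = 0) :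
    t = 0 := by
  obtain ⟨N, q, rfl⟩ := exists_eq_X_pow_add_two_mul_of_mem_twoPowLinearFactors hp
  have hq : aeval f (2 * q) t = 0 := by
    rw [map_mul, map_ofNat, Module.End.mul_apply, Module.End.ofNat_apply, ← ofNat_zsmul,
      ← map_zsmul, ht, map_zero]
  rw [map_add, LinearMap.add_apply, hq, add_zero, map_pow, aeval_X, Module.End.pow_apply] at hpt
  exact (hf.iterate N).eq_iff' (by simp) |>.mp hpt

theorem AddEquiv.bijective_two_zsmul_of_closure_eq_top (σ : H ≃+ H) {S : Set H}
    (hS : AddSubgroup.closure S = ⊤)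
    (heig : ∀ x ∈ S, ∃ k : ℕ, σ x = (2 : ℤ) ^ (k + 1) • x) :
    Function.Bijective (fun x : H => (2 : ℤ) • x) := by
  refine ⟨(injective_iff_map_eq_zero (zsmulAddGroupHom (α := H) 2)).mpr fun t ht => ?_, ?_⟩
  · obtain ⟨p, hp, hpt⟩ := exists_mem_twoPowLinearFactors_aeval_eq_zero
      (f := σ.toIntLinearEquiv.toLinearMap) heig (hS ▸ AddSubgroup.mem_top t)
    exact eq_zero_of_two_zsmul_eq_zero_of_aeval_eq_zero σ.injective hp hpt ht
  · suffices h : ⊤ ≤ (zsmulAddGroupHom (α := H) 2).range from fun x => h (AddSubgroup.mem_top x)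
    rw [← hS, AddSubgroup.closure_le]
    intro x hx
    obtain ⟨k, hk⟩ := heig x hx
    refine ⟨(2 : ℤ) ^ k • σ.symm x, ?_⟩
    calc (2 : ℤ) • (2 : ℤ) ^ k • σ.symm x = σ.symm ((2 : ℤ) ^ (k + 1) • x) := by
          rw [map_zsmul, smul_smul, pow_succ']
      _ = x := by rw [← hk, σ.symm_apply_apply]

end TwoDivisible

def AddEquiv.restrictKer {G K : Type*} [AddGroup G] [AddGroup K] (e : G ≃+ G) {p : G →+ K}
    (h : p.comp (e.symm : G →+ G) = p) : p.ker ≃+ p.ker :=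
  (e.addSubgroupMap p.ker).trans (AddEquiv.addSubgroupCongr (by
    rw [AddSubgroup.map_equiv_eq_comap_symm, AddMonoidHom.comap_ker, h]))

section MilnorSymbol

variable {S T : Type*} [CommRing S] [CommRing T] {m : ℕ}

theorem milnorSymbol_update_mul [DecidableEq (Fin m)] (f : Fin m → Sˣ) (i : Fin m) (u v : Sˣ) :
    milnorSymbol (Function.update f i (u * v)) =
      milnorSymbol (Function.update f i u) + milnorSymbol (Function.update f i v) := by
  obtain rfl : ‹DecidableEq (Fin m)› = instDecidableEqFin m := Subsingleton.elim _ _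
  rw [← sub_eq_zero, sub_add_eq_sub_sub]
  exact (QuotientAddGroup.eq_zero_iff _).mpr
    (AddSubgroup.subset_closure (Or.inl ⟨f, i, u, v, rfl⟩))

variable (S m) in
def milnorSymbolMultilinear : MultilinearMap ℤ (fun _ : Fin m => Additive Sˣ) (MilnorK S m) where
  toFun v := milnorSymbol (Additive.toMul ∘ v)
  map_update_add' v i x y := by
    simp only [Function.comp_update]
    exact milnorSymbol_update_mul _ i _ _
  map_update_smul' v i c x := by
    let g : Additive Sˣ →+ MilnorK S m :=
      AddMonoidHom.mk' (fun x => milnorSymbol (Additive.toMul ∘ Function.update v i x))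
        fun x y => by
          simp only [Function.comp_update]
          exact milnorSymbol_update_mul _ i _ _
    exact map_zsmul g c x

theorem milnorSymbol_eq_zero_of_eq_one (f : Fin m → Sˣ) {i : Fin m} (hf : f i = 1) :
    milnorSymbol f = 0 :=
  (milnorSymbolMultilinear S m).map_coord_zero (m := Additive.ofMul ∘ f) i (by simp [hf])

theorem milnorSymbol_mul_eq_sum_piecewise (a b : Fin m → Sˣ) :
    milnorSymbol (a * b) = ∑ T : Finset (Fin m), milnorSymbol (T.piecewise a b) :=
  (milnorSymbolMultilinear S m).map_add_univ (Additive.ofMul ∘ a) (Additive.ofMul ∘ b)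

theorem milnorSymbol_piecewise_zpow (T : Finset (Fin m)) (f : Fin m → Sˣ) (k : ℤ) :
    milnorSymbol (T.piecewise (fun i => f i ^ k) f) = k ^ T.card • milnorSymbol f := by
  rw [← Finset.prod_const]
  exact (milnorSymbolMultilinear S m).map_piecewise_smul (fun _ => k) (Additive.ofMul ∘ f) T

namespace MilnorK

theorem closure_range_milnorSymbol :
    AddSubgroup.closure (Set.range (milnorSymbol : (Fin m → Sˣ) → MilnorK S m)) = ⊤ := by
  refine (AddSubgroup.eq_top_iff' _).mpr fun x => ?_
  induction x using QuotientAddGroup.induction_on with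
  | H z =>
    induction z using FreeAbelianGroup.induction_on with
    | zero => exact zero_mem _
    | of f => exact AddSubgroup.subset_closure ⟨f, rfl⟩
    | neg f hf => exact neg_mem hf
    | add a b ha hb => exact add_mem ha hb

theorem hom_ext {A : Type*} [AddGroup A] {F G : MilnorK S m →+ A}
    (h : ∀ f : Fin m → Sˣ, F (milnorSymbol f) = G (milnorSymbol f)) : F = G :=
  AddMonoidHom.eq_of_eqOn_dense closure_range_milnorSymbol (by rintro _ ⟨f, rfl⟩; exact h f)

theorem map_milnorSymbol (φ : S →+* T) (f : Fin m → Sˣ) :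
    map φ m (milnorSymbol f) = milnorSymbol (Units.map (φ : S →* T) ∘ f) := rfl

theorem map_comp {U : Type*} [CommRing U] (φ : T →+* U) (ψ : S →+* T) :
    (map φ m).comp (map ψ m) = map (φ.comp ψ) m :=
  hom_ext fun _ => rfl

theorem map_id : map (RingHom.id S) m = AddMonoidHom.id (MilnorK S m) :=
  hom_ext fun _ => rfl

end MilnorK

end MilnorSymbol

section DualNumber

variable {R : Type*} [CommRing R]

variable (R) in
def inlUnit : Rˣ →* (DualNumber R)ˣ :=
  Units.map (inlHom R R : R →* DualNumber R)

theorem oneAddEps_add (r s : R) : oneAddEps R (r + s) = oneAddEps R r * oneAddEps R s := by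
  ext
  · simp [oneAddEps]
  · simp [oneAddEps, add_comm]

theorem oneAddEps_two_mul (r : R) : oneAddEps R (2 * r) = oneAddEps R r ^ 2 := by
  rw [two_mul, oneAddEps_add, sq]

theorem exists_eq_oneAddEps_mul_inlUnit (w : (DualNumber R)ˣ) :
    ∃ (r : R) (u : Rˣ), w = oneAddEps R r * inlUnit R u := by
  let u : Rˣ := Units.map (fstHom R R R : DualNumber R →* R) w
  refine ⟨(↑u⁻¹ : R) * snd (w : DualNumber R), u, Units.ext ?_⟩
  have hu : fst (↑w⁻¹ : DualNumber R) * fst (w : DualNumber R) = 1 := u.inv_mul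
  have hsnd : snd (w : DualNumber R) =
      fst (↑w⁻¹ : DualNumber R) * snd (w : DualNumber R) * fst (w : DualNumber R) := by
    linear_combination -(snd (w : DualNumber R)) * hu
  ext
  · simp [oneAddEps, inlUnit, u]
  · simpa [oneAddEps, inlUnit, u] using hsnd

@[simp]
theorem units_map_fst_oneAddEps (r : R) :
    Units.map (fstHom R R R : DualNumber R →* R) (oneAddEps R r) = 1 := by
  ext
  simp [oneAddEps]

@[simp]
theorem units_map_fst_inlUnit (u : Rˣ) :
    Units.map (fstHom R R R : DualNumber R →* R) (inlUnit R u) = u := by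
  ext
  simp [inlUnit]

@[simp]
theorem units_map_epsScale_oneAddEps (a r : R) :
    Units.map (epsScale R a : DualNumber R →* DualNumber R) (oneAddEps R r) =
      oneAddEps R (a * r) := by
  ext
  · simp [oneAddEps, epsScale]
  · simp [oneAddEps, epsScale]

@[simp]
theorem units_map_epsScale_inlUnit (a : R) (u : Rˣ) :
    Units.map (epsScale R a : DualNumber R →* DualNumber R) (inlUnit R u) = inlUnit R u := by
  ext
  · simp [inlUnit, epsScale]
  · simp [inlUnit, epsScale]

theorem epsScale_comp_epsScale (a b : R) :
    (epsScale R a).comp (epsScale R b) = epsScale R (a * b) := by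
  refine RingHom.ext fun x => ?_
  ext
  · simp [epsScale]
  · simp [epsScale, mul_assoc]

theorem epsScale_one : epsScale R 1 = RingHom.id (DualNumber R) := by
  refine RingHom.ext fun x => ?_
  ext
  · simp [epsScale]
  · simp [epsScale]

theorem fstHom_comp_epsScale (a : R) :
    (fstHom R R R).toRingHom.comp (epsScale R a) = (fstHom R R R).toRingHom := by
  refine RingHom.ext fun x => ?_
  simp [epsScale]

end DualNumber

section Kernel

variable {R : Type*} [CommRing R] {m : ℕ}

variable (R m) in
def mixedSymbols : Set (MilnorK (DualNumber R) m) :=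
  {x | ∃ (T : Finset (Fin m)) (r : Fin m → R) (u : Fin m → Rˣ), T.Nonempty ∧
    x = milnorSymbol (T.piecewise (fun i => oneAddEps R (r i)) (fun i => inlUnit R (u i)))}

theorem map_fst_eq_zero_of_mem_mixedSymbols {x : MilnorK (DualNumber R) m}
    (hx : x ∈ mixedSymbols R m) : MilnorK.map (fstHom R R R).toRingHom m x = 0 := by
  obtain ⟨T, r, u, ⟨i, hi⟩, rfl⟩ := hx
  refine milnorSymbol_eq_zero_of_eq_one _ (i := i) ?_
  simp [Finset.piecewise_eq_of_mem _ _ _ hi]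

theorem exists_map_epsScale_two_eq_of_mem_mixedSymbols {x : MilnorK (DualNumber R) m}
    (hx : x ∈ mixedSymbols R m) :
    ∃ k : ℕ, MilnorK.map (epsScale R 2) m x = (2 : ℤ) ^ (k + 1) • x := by
  obtain ⟨T, r, u, hT, rfl⟩ := hx
  obtain ⟨k, hk⟩ : ∃ k, T.card = k + 1 := Nat.exists_eq_succ_of_ne_zero hT.card_pos.ne'
  refine ⟨k, ?_⟩
  rw [← hk, ← milnorSymbol_piecewise_zpow, MilnorK.map_milnorSymbol]
  congr 1
  funext i
  by_cases hi : i ∈ T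
  · simp [hi, oneAddEps_two_mul]
  · simp [hi]

theorem milnorSymbol_sub_mem_closure_mixedSymbols (w : Fin m → (DualNumber R)ˣ) :
    milnorSymbol w - MilnorK.map (inlHom R R) m
        (MilnorK.map (fstHom R R R).toRingHom m (milnorSymbol w)) ∈
      AddSubgroup.closure (mixedSymbols R m) := by
  choose r u hw using fun i => exists_eq_oneAddEps_mul_inlUnit (w i)
  have hinl : MilnorK.map (inlHom R R) m (MilnorK.map (fstHom R R R).toRingHom m (milnorSymbol w))
      = milnorSymbol (fun i => inlUnit R (u i)) := by
    rw [MilnorK.map_milnorSymbol, MilnorK.map_milnorSymbol]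
    congr 1
    funext i
    simp only [Function.comp_apply, hw, map_mul, AlgHom.toRingHom_eq_coe,
      AlgHom.toRingHom_toMonoidHom, units_map_fst_oneAddEps, units_map_fst_inlUnit, one_mul]
    rfl
  rw [hinl, show w = (fun i => oneAddEps R (r i)) * (fun i => inlUnit R (u i)) from funext hw,
    milnorSymbol_mul_eq_sum_piecewise, ← Finset.add_sum_erase _ _ (Finset.mem_univ ∅),
    Finset.piecewise_empty, add_sub_cancel_left]
  exact sum_mem fun T hT => AddSubgroup.subset_closure
    ⟨T, r, u, Finset.nonempty_iff_ne_empty.mpr (Finset.ne_of_mem_erase hT), rfl⟩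

theorem ker_map_fst_eq_closure_mixedSymbols :
    (MilnorK.map (fstHom R R R).toRingHom m).ker = AddSubgroup.closure (mixedSymbols R m) := by
  refine le_antisymm (fun x hx => ?_)
    ((AddSubgroup.closure_le _).mpr fun x hx => map_fst_eq_zero_of_mem_mixedSymbols hx)
  let ρ := AddMonoidHom.id _ -
    (MilnorK.map (inlHom R R) m).comp (MilnorK.map (fstHom R R R).toRingHom m)
  have hρ : AddSubgroup.closure (Set.range milnorSymbol) ≤
      (AddSubgroup.closure (mixedSymbols R m)).comap ρ :=
    (AddSubgroup.closure_le _).mpr fun _ ⟨w, hw⟩ =>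
      hw ▸ milnorSymbol_sub_mem_closure_mixedSymbols w
  rw [MilnorK.closure_range_milnorSymbol] at hρ
  have hρx := hρ (AddSubgroup.mem_top x)
  rwa [AddSubgroup.mem_comap, AddMonoidHom.sub_apply, AddMonoidHom.comp_apply,
    (AddMonoidHom.mem_ker).mp hx, map_zero, sub_zero] at hρx

variable (R m) in
noncomputable def epsScaleAddEquiv (a : Rˣ) :
    MilnorK (DualNumber R) m ≃+ MilnorK (DualNumber R) m :=
  AddMonoidHom.toAddEquiv (MilnorK.map (epsScale R a) m) (MilnorK.map (epsScale R ↑a⁻¹) m)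
    (by rw [MilnorK.map_comp, epsScale_comp_epsScale, Units.inv_mul, epsScale_one, MilnorK.map_id])
    (by rw [MilnorK.map_comp, epsScale_comp_epsScale, Units.mul_inv, epsScale_one, MilnorK.map_id])

theorem map_fst_comp_map_epsScale (a : R) :
    (MilnorK.map (fstHom R R R).toRingHom m).comp (MilnorK.map (epsScale R a) m) =
      MilnorK.map (fstHom R R R).toRingHom m := by
  rw [MilnorK.map_comp, fstHom_comp_epsScale]

end Kernel

/-- if `1/2 ∈ R`, the kernel `TK^M_{n+1}(R)` of the natural map
`K^M_{n+1}(R[ε]) → K^M_{n+1}(R)` induced by `ε ↦ 0` is uniquely 2-divisible. -/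
theorem stmt_10 (R : Type*) [CommRing R] [Invertible (2 : R)] (n : ℕ) :
    Function.Bijective
      (fun x : (MilnorK.map (TrivSqZeroExt.fstHom R R R).toRingHom (n + 1)).ker =>
        (2 : ℤ) • x) := by
  let σ := (epsScaleAddEquiv R (n + 1) (unitOfInvertible 2)).restrictKer
    (map_fst_comp_map_epsScale _)
  refine σ.bijective_two_zsmul_of_closure_eq_top
    (S := AddSubgroup.subtype _ ⁻¹' mixedSymbols R (n + 1)) ?_ fun x hx => ?_
  · rw [ker_map_fst_eq_closure_mixedSymbols]
    exact AddSubgroup.closure_preimage_eq_top _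
  · obtain ⟨k, hk⟩ := exists_map_epsScale_two_eq_of_mem_mixedSymbols hx
    exact ⟨k, Subtype.ext hk⟩
end

section
/- Let R be a commutative ring in which every element is a sum of two units (weakly 2-fold stable), let M be an R-module, and let f : (R^*)^n → M be a map satisfying: (i) f is alternating (swapping adjacent arguments negates the value, and the value is 0 if two adjacent arguments are equal); (ii) the Leibniz rule f(r₁r₁', r₂,…,r_n) = r₁·f(r₁',r₂,…,r_n) + r₁'·f(r₁,r₂,…,r_n); (iii) additive multilinearity: whenever units r₁₁,…,r_{1N} (N ≥ 2) satisfy r₁₁ + … + r_{1N} = 0, the sum Σ_j f(r_{1j}, r₂, …, r_n) = 0. Then there is a unique R-module homomorphism F : Ω^n_R → M with F(s·dr₁∧…∧dr_n) = s·f(r₁,…,r_n) for all units r₁,…,r_n and all s ∈ R. -/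
/-- The differential form `s·dr₁ ∧ … ∧ dr_n` in `Ω^n_R = ⋀^n Ω¹_{R/ℤ}`. -/
noncomputable def wedgeD (R : Type*) [CommRing R] (n : ℕ) (s : R) (r : Fin n → Rˣ) :
    ⋀[R]^n (Ω[R⁄ℤ]) :=
  s • ⟨ExteriorAlgebra.ιMulti R n (fun i => KaehlerDifferential.D ℤ R ((r i : R))),
    ExteriorAlgebra.ιMulti_range R n (Set.mem_range_self _)⟩

/-! Every element of `R` is a sum of two units, so the differentials `du` of units span `Ω¹`, and a
map `h` on units that kills every vanishing sum of units and satisfies the Leibniz rule extends,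
by `u + v ↦ h u + h v`, to a derivation of `R`.

Induct on `n`. For each unit `u` the map `f (u, -)` again satisfies (i)–(iii), so it comes from an
alternating map `Φ u` on `Ω¹`. As the `du` span, `u ↦ Φ u` inherits additivity and the Leibniz
rule from `f` and extends to a linear map `L` on `Ω¹`. The uncurried map `(x, y, …) ↦ L x (y, …)`
is alternating: in the last `n - 1` slots because each `L x` is, and in the first two because
`(x, y) ↦ L x (y, -)` is antisymmetric and, on the spanning set, vanishes on the diagonal. The
universal property of `⋀^n` then gives `F`, unique because the `du₁ ∧ … ∧ duₙ` span `Ω^n`. -/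

open Function Submodule
open KaehlerDifferential (D)

namespace AlternatingMap

variable {R E N : Type*} [CommRing R] [AddCommGroup E] [Module R E] [AddCommGroup N]
  [Module R N] {n : ℕ}

theorem sum_apply {ι α : Type*} (s : Finset α) (g : α → E [⋀^ι]→ₗ[R] N) (v : ι → E) :
    (∑ a ∈ s, g a) v = ∑ a ∈ s, g a v := by
  have := congr($(map_sum (toMultilinearMapLM (S := R)) g s) v)
  rwa [_root_.sum_apply] at this

theorem ext_of_span_range {ι : Type*} {g : ι → E} (hg : span R (Set.range g) = ⊤)
    {Φ Ψ : E [⋀^Fin n]→ₗ[R] N} (h : ∀ u : Fin n → ι, Φ (g ∘ u) = Ψ (g ∘ u)) : Φ = Ψ := by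
  apply exteriorPower.alternatingMapLinearEquiv.injective
  refine LinearMap.ext_on (exteriorPower.ιMulti_span_of_span R n E hg) ?_
  rintro _ ⟨a, ha, rfl⟩
  obtain ⟨u, rfl⟩ := Set.range_subset_range_iff_exists_comp.mp ha
  simp only [exteriorPower.alternatingMapLinearEquiv_apply_ιMulti, h]

theorem apply_eq_zero_of_isAlt (L : E →ₗ[R] E [⋀^Fin (n + 1)]→ₗ[R] N)
    (hL : (curryLeftLinearMap ∘ₗ L).IsAlt) {x : E} {v : Fin (n + 1) → E} {k : Fin (n + 1)}
    (hk : v k = x) : L x v = 0 := by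
  have hcons : ∀ w : Fin (n + 1) → E, w 0 = x → L x w = 0 := fun w hw => by
    simpa [← hw, Matrix.vecCons, Fin.cons_self_tail] using congr($(hL x) (Fin.tail w))
  rcases eq_or_ne k 0 with rfl | hk0
  · exact hcons v hk
  · rw [← neg_eq_zero, ← (L x).map_swap v hk0.symm]
    exact hcons _ (by simpa using hk)

theorem exists_uncurryLeft (L : E →ₗ[R] E [⋀^Fin n]→ₗ[R] N)
    (hL : ∀ (x : E) (v : Fin n → E) (k : Fin n), v k = x → L x v = 0) :
    ∃ Φ : E [⋀^Fin (n + 1)]→ₗ[R] N, ∀ v, Φ v = L (v 0) (Fin.tail v) := by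
  refine ⟨{ (toMultilinearMapLM (S := R) ∘ₗ L).uncurryLeft with
    map_eq_zero_of_eq' := fun v i j hv hij => ?_ }, fun v => rfl⟩
  change L (v 0) (Fin.tail v) = 0
  cases i using Fin.cases with
  | zero =>
    cases j using Fin.cases with
    | zero => exact absurd rfl hij
    | succ j => exact hL _ _ j hv.symm
  | succ i =>
    cases j using Fin.cases with
    | zero => exact hL _ _ i hv
    | succ j => exact (L (v 0)).map_eq_zero_of_eq _ hv (ne_of_apply_ne Fin.succ hij)

end AlternatingMap

theorem LinearMap.isAlt_of_span_range {R E P ι : Type*} [CommRing R] [AddCommGroup E]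
    [Module R E] [AddCommGroup P] [Module R P] {g : ι → E}
    (hg : span R (Set.range g) = ⊤) (B : E →ₗ[R] E →ₗ[R] P)
    (hanti : ∀ i j, B (g i) (g j) = -B (g j) (g i)) (hdiag : ∀ i, B (g i) (g i) = 0) :
    B.IsAlt := by
  have hflip : B.flip = -B :=
    ext_on_range hg fun j => ext_on_range hg fun i => by simp [hanti i j]
  intro x
  have hx : x ∈ span R (Set.range g) := hg ▸ mem_top
  induction hx using span_induction with
  | mem _ hx => obtain ⟨i, rfl⟩ := hx; exact hdiag i
  | zero => simp
  | add x y _ _ hx hy =>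
    have hyx : B y x = -B x y := by simpa using congr($hflip x y)
    simp [hx, hy, hyx]
  | smul c x _ hx => simp [hx]

theorem Fin.cons_comp_swap_succ {α : Type*} {n : ℕ} (x : α) (r : Fin n → α) (i j : Fin n) :
    Fin.cons x (r ∘ Equiv.swap i j) =
      (Fin.cons x r : Fin (n + 1) → α) ∘ Equiv.swap i.succ j.succ := by
  ext k
  cases k using Fin.cases with
  | zero =>
    simp [Equiv.swap_apply_of_ne_of_ne (Fin.succ_ne_zero i).symm (Fin.succ_ne_zero j).symm]
  | succ k =>
    simp only [Fin.cons_succ, comp_apply, Equiv.swap_apply_def, Fin.succ_inj]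
    split_ifs <;> simp

section UnitFunctions

variable {R N : Type*} [CommRing R] [AddCommGroup N]

def IsUnitAdditive (h : Rˣ → N) : Prop :=
  ∀ (k : ℕ) (a : Fin k → Rˣ), 2 ≤ k → ∑ i, (a i : R) = 0 → ∑ i, h (a i) = 0

theorem IsUnitAdditive.neg {h : Rˣ → N} (hh : IsUnitAdditive h) : IsUnitAdditive (-h) :=
  fun k a hk hsum => by simp [Finset.sum_neg_distrib, hh k a hk hsum]

theorem IsUnitAdditive.map_neg {h : Rˣ → N} (hh : IsUnitAdditive h) (u : Rˣ) :
    h (-u) = -h u := by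
  simpa [eq_neg_iff_add_eq_zero, add_comm] using hh 2 ![u, -u] le_rfl (by simp)

theorem IsUnitAdditive.sum_eq_sum {h : Rˣ → N} (hh : IsUnitAdditive h) {k l : ℕ}
    (a : Fin k → Rˣ) (b : Fin l → Rˣ) (hkl : 2 ≤ k + l)
    (hab : ∑ i, (a i : R) = ∑ j, (b j : R)) : ∑ i, h (a i) = ∑ j, h (b j) := by
  have := hh (k + l) (Fin.append a (-b)) hkl (by simp [Fin.sum_univ_add, hab])
  simpa [Fin.sum_univ_add, hh.map_neg, sub_eq_zero, ← sub_eq_add_neg] using this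

theorem IsUnitAdditive.exists_addMonoidHom (hR : ∀ a : R, ∃ u v : Rˣ, a = u + v)
    {h : Rˣ → N} (hh : IsUnitAdditive h) : ∃ A : R →+ N, ∀ u : Rˣ, A u = h u := by
  choose U V hUV using hR
  refine ⟨AddMonoidHom.mk' (fun a => h (U a) + h (V a)) fun a b => ?_, fun u => ?_⟩
  · have hab : (U (a + b) + V (a + b) : R) = U a + V a + (U b + V b) := by
      rw [← hUV, ← hUV, ← hUV]
    simpa [Fin.sum_univ_succ, add_assoc] using
      hh.sum_eq_sum ![U (a + b), V (a + b)] ![U a, V a, U b, V b] (by norm_num)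
        (by simpa [Fin.sum_univ_succ, add_assoc] using hab)
  · simpa [Fin.sum_univ_succ] using
      hh.sum_eq_sum ![U u, V u] ![u] (by norm_num) (by simp [Fin.sum_univ_succ, ← hUV])

variable [Module R N]

def IsUnitLeibniz (h : Rˣ → N) : Prop :=
  ∀ u v : Rˣ, h (u * v) = (u : R) • h v + (v : R) • h u

theorem IsUnitLeibniz.neg {h : Rˣ → N} (hh : IsUnitLeibniz h) : IsUnitLeibniz (-h) :=
  fun u v => by simp [hh u v, add_comm]

theorem IsUnitAdditive.exists_derivation (hR : ∀ a : R, ∃ u v : Rˣ, a = u + v)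
    {h : Rˣ → N} (hadd : IsUnitAdditive h) (hleib : IsUnitLeibniz h) :
    ∃ d : Derivation ℤ R N, ∀ u : Rˣ, d u = h u := by
  obtain ⟨A, hA⟩ := hadd.exists_addMonoidHom hR
  refine ⟨Derivation.mk' A.toIntLinearMap fun a b => ?_, hA⟩
  obtain ⟨u, v, rfl⟩ := hR a
  obtain ⟨w, z, rfl⟩ := hR b
  simp only [AddMonoidHom.coe_toIntLinearMap, add_mul, mul_add, map_add, ← Units.val_mul, hA,
    hleib _ _, add_smul, smul_add]
  abel

end UnitFunctions

theorem span_range_D_units {R : Type*} [CommRing R] (hR : ∀ a : R, ∃ u v : Rˣ, a = u + v) :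
    span R (Set.range fun u : Rˣ => D ℤ R (u : R)) = ⊤ := by
  rw [eq_top_iff, ← KaehlerDifferential.span_range_derivation, span_le]
  rintro _ ⟨a, rfl⟩
  obtain ⟨u, v, rfl⟩ := hR a
  rw [map_add]
  exact add_mem (subset_span ⟨u, rfl⟩) (subset_span ⟨v, rfl⟩)

section UnitForms

variable {R M : Type*} [CommRing R] [AddCommGroup M] [Module R M] {n : ℕ}

structure IsUnitForm (f : (Fin n → Rˣ) → M) : Prop where
  map_swap : ∀ (r : Fin n → Rˣ) (i j : Fin n), (i : ℕ) + 1 = j → f (r ∘ Equiv.swap i j) = -f r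
  map_eq_zero : ∀ (r : Fin n → Rˣ) (i j : Fin n), (i : ℕ) + 1 = j → r i = r j → f r = 0
  isUnitAdditive : ∀ (hn : 0 < n) (r : Fin n → Rˣ),
    IsUnitAdditive fun x => f (update r ⟨0, hn⟩ x)
  isUnitLeibniz : ∀ (hn : 0 < n) (r : Fin n → Rˣ),
    IsUnitLeibniz fun x => f (update r ⟨0, hn⟩ x)

namespace IsUnitForm

theorem isUnitAdditive_cons {f : (Fin (n + 1) → Rˣ) → M} (hf : IsUnitForm f)
    (w : Fin n → Rˣ) : IsUnitAdditive fun x => f (Fin.cons x w) := by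
  simpa using hf.isUnitAdditive n.succ_pos (Fin.cons 1 w)

theorem isUnitLeibniz_cons {f : (Fin (n + 1) → Rˣ) → M} (hf : IsUnitForm f)
    (w : Fin n → Rˣ) : IsUnitLeibniz fun x => f (Fin.cons x w) := by
  simpa using hf.isUnitLeibniz n.succ_pos (Fin.cons 1 w)

theorem cons {f : (Fin (n + 1) → Rˣ) → M} (hf : IsUnitForm f) (u : Rˣ) :
    IsUnitForm fun w : Fin n → Rˣ => f (Fin.cons u w) := by
  -- slot `0` of `f (u, -)` is slot `1` of `f`, which the swap `(0 1)` moves to slot `0`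
  have hslot : ∀ (hn : 0 < n) (r : Fin n → Rˣ),
      (fun x => f (Fin.cons u (update r ⟨0, hn⟩ x))) =
        -fun x => f (update (Fin.cons u r ∘ Equiv.swap 0 (Fin.succ ⟨0, hn⟩)) 0 x) := by
    intro hn r
    ext x
    rw [Pi.neg_apply, ← hf.map_swap _ 0 (Fin.succ ⟨0, hn⟩) (by simp), Fin.cons_update,
      update_comp_equiv]
    simp [comp_def, Equiv.swap_apply_self]
  refine ⟨fun r i j hij => ?_, fun r i j hij hr => ?_, fun hn r => ?_, fun hn r => ?_⟩
  · rw [Fin.cons_comp_swap_succ]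
    exact hf.map_swap _ _ _ (by simpa using hij)
  · exact hf.map_eq_zero _ i.succ j.succ (by simpa using hij) (by simpa using hr)
  · rw [hslot]
    exact (hf.isUnitAdditive _ _).neg
  · rw [hslot]
    exact (hf.isUnitLeibniz _ _).neg

theorem map_cons_cons_swap {f : (Fin (n + 2) → Rˣ) → M} (hf : IsUnitForm f) (u v : Rˣ)
    (w : Fin n → Rˣ) : f (Fin.cons u (Fin.cons v w)) = -f (Fin.cons v (Fin.cons u w)) := by
  rw [← hf.map_swap _ 0 1 rfl]
  congr 1
  ext k
  cases k using Fin.cases with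
  | zero => simp
  | succ k => cases k using Fin.cases <;> simp [Equiv.swap_apply_def, Fin.ext_iff]

theorem map_cons_cons_self {f : (Fin (n + 2) → Rˣ) → M} (hf : IsUnitForm f) (u : Rˣ)
    (w : Fin n → Rˣ) : f (Fin.cons u (Fin.cons u w)) = 0 :=
  hf.map_eq_zero _ 0 1 rfl rfl

theorem exists_alternatingMap_succ (hR : ∀ a : R, ∃ u v : Rˣ, a = u + v)
    {f : (Fin (n + 1) → Rˣ) → M} (hf : IsUnitForm f) (Φ : Rˣ → Ω[R⁄ℤ] [⋀^Fin n]→ₗ[R] M)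
    (hΦ : ∀ u w, Φ u (fun i => D ℤ R (w i : R)) = f (Fin.cons u w)) :
    ∃ Ψ : Ω[R⁄ℤ] [⋀^Fin (n + 1)]→ₗ[R] M, ∀ u, Ψ (fun i => D ℤ R (u i : R)) = f u := by
  have hspan := span_range_D_units hR
  have hadd : IsUnitAdditive Φ := fun k a hk hsum =>
    AlternatingMap.ext_of_span_range hspan fun w => by
      simpa [AlternatingMap.sum_apply, comp_def, hΦ] using hf.isUnitAdditive_cons w k a hk hsum
  have hleib : IsUnitLeibniz Φ := fun u v =>
    AlternatingMap.ext_of_span_range hspan fun w => by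
      simpa [comp_def, hΦ] using hf.isUnitLeibniz_cons w u v
  obtain ⟨d, hd⟩ := hadd.exists_derivation hR hleib
  set L := d.liftKaehlerDifferential
  have hL : ∀ u : Rˣ, L (D ℤ R u) = Φ u := fun u =>
    (d.liftKaehlerDifferential_comp_D _).trans (hd u)
  have hdiag : ∀ x (v : Fin n → Ω[R⁄ℤ]) k, v k = x → L x v = 0 := by
    cases n with
    | zero => exact fun _ _ k => k.elim0
    | succ m =>
      have hΦ₂ : ∀ (u v : Rˣ) w, (Φ u).curryLeft (D ℤ R v) (fun i => D ℤ R (w i : R)) =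
          f (Fin.cons u (Fin.cons v w)) := by
        intro u v w
        rw [AlternatingMap.curryLeft_apply_apply, ← hΦ]
        congr 1
        ext i
        cases i using Fin.cases <;> simp
      refine fun x v k hk => AlternatingMap.apply_eq_zero_of_isAlt L
        (LinearMap.isAlt_of_span_range hspan _ (fun u v => ?_) (fun u => ?_)) hk
      · exact AlternatingMap.ext_of_span_range hspan fun w => by
          simpa [hL, comp_def, hΦ₂] using hf.map_cons_cons_swap u v w
      · exact AlternatingMap.ext_of_span_range hspan fun w => by
          simpa [hL, comp_def, hΦ₂] using hf.map_cons_cons_self u w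
  obtain ⟨Ψ, hΨ⟩ := AlternatingMap.exists_uncurryLeft L hdiag
  refine ⟨Ψ, fun u => ?_⟩
  rw [hΨ, hL]
  exact (hΦ (u 0) (Fin.tail u)).trans (congrArg f (Fin.cons_self_tail u))

theorem exists_alternatingMap (hR : ∀ a : R, ∃ u v : Rˣ, a = u + v)
    {f : (Fin n → Rˣ) → M} (hf : IsUnitForm f) :
    ∃ Φ : Ω[R⁄ℤ] [⋀^Fin n]→ₗ[R] M, ∀ u, Φ (fun i => D ℤ R (u i : R)) = f u := by
  induction n with
  | zero =>
    exact ⟨AlternatingMap.constOfIsEmpty R _ _ (f Fin.elim0), fun u => by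
      simp [Subsingleton.elim u Fin.elim0]⟩
  | succ n ih =>
    choose Φ hΦ using fun u => ih (hf.cons u)
    exact hf.exists_alternatingMap_succ hR Φ hΦ

end IsUnitForm

end UnitForms

/-- let `R` be a ring in which every element is a sum of two units
(weak 2-fold stability), `M` an `R`-module and `f : (Rˣ)^n → M` a map which is
alternating, satisfies the Leibniz rule in the first variable, and is additively
multilinear in the first variable. Then there is a unique `R`-linear map
`F : Ω^n_R → M` with `F(s·dr₁ ∧ … ∧ dr_n) = s·f(r₁, …, r_n)`. -/
theorem stmt_16 (R : Type*) [CommRing R] (n : ℕ)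
    (hstab : ∀ a : R, ∃ u v : Rˣ, a = (u : R) + (v : R))
    (M : Type*) [AddCommGroup M] [Module R M] (f : (Fin n → Rˣ) → M)
    -- (i) alternating: swapping two adjacent arguments negates the value …
    (halt_swap : ∀ (r : Fin n → Rˣ) (i j : Fin n), (i : ℕ) + 1 = (j : ℕ) →
      f (r ∘ Equiv.swap i j) = - f r)
    -- … and the value is `0` if two adjacent arguments coincide
    (halt_eq : ∀ (r : Fin n → Rˣ) (i j : Fin n), (i : ℕ) + 1 = (j : ℕ) →
      r i = r j → f r = 0)
    -- (ii) Leibniz rule in the first variable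
    (hleib : ∀ (hn : 0 < n) (r : Fin n → Rˣ) (u v : Rˣ), r ⟨0, hn⟩ = u * v →
      f r = (u : R) • f (Function.update r ⟨0, hn⟩ v)
          + (v : R) • f (Function.update r ⟨0, hn⟩ u))
    -- (iii) additive multilinearity in the first variable
    (hadd : ∀ (hn : 0 < n) (N : ℕ), 2 ≤ N → ∀ (a : Fin N → Rˣ) (r : Fin n → Rˣ),
      (∑ j, (a j : R)) = 0 → ∑ j, f (Function.update r ⟨0, hn⟩ (a j)) = 0) :
    ∃! F : (⋀[R]^n (Ω[R⁄ℤ])) →ₗ[R] M,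
      ∀ (s : R) (r : Fin n → Rˣ), F (wedgeD R n s r) = s • f r := by
  have hf : IsUnitForm f :=
    { map_swap := halt_swap
      map_eq_zero := halt_eq
      isUnitAdditive := fun hn r k a hk hsum => hadd hn k hk a r hsum
      isUnitLeibniz := fun hn r u v => by
        simpa using hleib hn (update r ⟨0, hn⟩ (u * v)) u v (update_self ..) }
  obtain ⟨Φ, hΦ⟩ := hf.exists_alternatingMap hstab
  have hwedge : ∀ s r, wedgeD R n s r = s • exteriorPower.ιMulti R n (fun i => D ℤ R (r i : R)) :=
    fun _ _ => rfl
  refine ⟨exteriorPower.alternatingMapLinearEquiv Φ, fun s r => by simp [hwedge, hΦ],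
    fun F hF => exteriorPower.linearMap_ext ?_⟩
  refine AlternatingMap.ext_of_span_range (span_range_D_units hstab) fun u => ?_
  simpa [hwedge, comp_def, hΦ] using hF 1 u
end

section
/- Let R be a commutative ring in which every element is a sum of two units. Then the R-module Ω^n_R of n-th absolute Kähler differentials is generated by the elements s·dr₁ ∧ … ∧ dr_n with r₁,…,r_n ∈ R^* and s ∈ R. -/
/-- If a set `s` spans `M`, then a multilinear map applied to an arbitrary tuple lies in
the span of its values on tuples from `s`. -/
lemma multilinear_mem_span_aux {R M N : Type*} [CommRing R] [AddCommGroup M] [Module R M]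
    [AddCommGroup N] [Module R N] {n : ℕ}
    (f : MultilinearMap R (fun _ : Fin n => M) N) (s : Set M)
    (hs : Submodule.span R s = ⊤) (m : Fin n → M) :
    f m ∈ Submodule.span R {x | ∃ v : Fin n → M, (∀ i, v i ∈ s) ∧ x = f v} := by
  set T := Submodule.span R {x | ∃ v : Fin n → M, (∀ i, v i ∈ s) ∧ x = f v} with hT
  suffices H : ∀ k : ℕ, ∀ m : Fin n → M, (∀ i : Fin n, k ≤ (i : ℕ) → m i ∈ s) → f m ∈ T by
    exact H n m (fun i hi => absurd hi (not_le.2 i.isLt))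
  intro k
  induction k with
  | zero =>
    intro m hm
    exact Submodule.subset_span ⟨m, fun i => hm i (Nat.zero_le _), rfl⟩
  | succ k ih =>
    intro m hm
    by_cases hk : k < n
    · set j : Fin n := ⟨k, hk⟩
      have hmem : m j ∈ Submodule.span R s := by rw [hs]; trivial
      have key : ∀ x ∈ Submodule.span R s, f (Function.update m j x) ∈ T := by
        intro x hx
        induction hx using Submodule.span_induction with
        | mem x hxs =>
          refine ih _ fun i hi => ?_
          rcases eq_or_ne i j with rfl | hij
          · simpa using hxs
          · rw [Function.update_of_ne hij]
            exact hm i (by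
              rcases lt_or_ge (i : ℕ) (k+1) with h | h
              · exact absurd (Fin.ext (Nat.le_antisymm (Nat.lt_succ_iff.1 h) hi)) hij
              · exact h)
        | zero => rw [f.map_update_zero]; exact Submodule.zero_mem _
        | add x y _ _ hx hy => rw [f.map_update_add]; exact Submodule.add_mem _ hx hy
        | smul c x _ hx => rw [f.map_update_smul]; exact Submodule.smul_mem _ _ hx
      have := key (m j) hmem
      rwa [Function.update_eq_self] at this
    · refine ih m fun i _ => hm i ?_
      have := i.isLt; omega

/-- if every element of `R` is a sum of two units (weak 2-fold stability),
then `Ω^n_R` is generated as an `R`-module by the forms `s·dr₁ ∧ … ∧ dr_n` with the `rᵢ`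
units and `s ∈ R`. -/
theorem stmt_17 (R : Type*) [CommRing R] (n : ℕ)
    (hstab : ∀ a : R, ∃ u v : Rˣ, a = (u : R) + (v : R)) :
    Submodule.span R {ω : ⋀[R]^n (Ω[R⁄ℤ]) |
      ∃ (s : R) (r : Fin n → Rˣ), ω = wedgeD R n s r} = ⊤ := by
  set S := Submodule.span R {ω : ⋀[R]^n (Ω[R⁄ℤ]) |
      ∃ (s : R) (r : Fin n → Rˣ), ω = wedgeD R n s r} with hS
  -- the set of unit differentials spans Ω¹
  set U : Set (Ω[R⁄ℤ]) := Set.range fun u : Rˣ => KaehlerDifferential.D ℤ R (u : R) with hU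
  have hUspan : Submodule.span R U = ⊤ := by
    rw [eq_top_iff, ← KaehlerDifferential.span_range_derivation, Submodule.span_le]
    rintro _ ⟨a, rfl⟩
    obtain ⟨u, v, rfl⟩ := hstab a
    rw [map_add]
    exact Submodule.add_mem _ (Submodule.subset_span ⟨u, rfl⟩)
      (Submodule.subset_span ⟨v, rfl⟩)
  rw [eq_top_iff]
  rintro ω -
  -- work in the exterior algebra
  have hω : (ω : ExteriorAlgebra R (Ω[R⁄ℤ])) ∈ S.map (⋀[R]^n (Ω[R⁄ℤ])).subtype := by
    have h1 : (ω : ExteriorAlgebra R (Ω[R⁄ℤ])) ∈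
        Submodule.span R (Set.range (ExteriorAlgebra.ιMulti R n (M := Ω[R⁄ℤ]))) := by
      rw [ExteriorAlgebra.ιMulti_span_fixedDegree]; exact ω.2
    refine Submodule.span_le.2 ?_ h1
    rintro _ ⟨m, rfl⟩
    have h2 := multilinear_mem_span_aux
      ((ExteriorAlgebra.ιMulti R n (M := Ω[R⁄ℤ])).toMultilinearMap) U hUspan m
    refine Submodule.span_le.2 ?_ h2
    rintro _ ⟨v, hv, rfl⟩
    choose r hr using hv
    obtain rfl : v = fun i => KaehlerDifferential.D ℤ R ((r i : R)) := funext fun i => (hr i).symm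
    exact ⟨wedgeD R n 1 r, Submodule.subset_span ⟨1, r, rfl⟩, by simp [wedgeD]⟩
  obtain ⟨w, hw, hww⟩ := hω
  rwa [show ω = w from Subtype.ext hww.symm]
end
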